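/- Assume hypothesis (M) with constants p ∈ (0,1) and l > 0. Then there exist constants l' > 0 and c₁, c₂ > 0 such that for all r > 0 and r' > 0, almost surely ℙ( τ_{r+r'} − τ_r ≤ l'·r' | F_{τ_r} ) < c₁ · exp(−c₂ r'). -/

import Mathlib

open MeasureTheory ENNReal

/-- The natural filtration of a process `η : [0,∞) × Ω → ℂ`, indexed by `ℝ≥0∞`:
`F_i = σ(η_s : ENNReal.ofReal s ≤ i)`. -/
noncomputable def natFiltration {Ω : Type*} [m0 : MeasurableSpace Ω]
    (η : ℝ → Ω → ℂ) (hmeas : ∀ t, Measurable (η t)) :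
    Filtration ℝ≥0∞ m0 where
  seq i := ⨆ (s : ℝ) (_ : ENNReal.ofReal s ≤ i), MeasurableSpace.comap (η s) inferInstance
  mono' := fun i j hij => by
    refine iSup_le fun s => iSup_le fun hs => ?_
    exact le_iSup_of_le s (le_iSup_of_le (hs.trans hij) le_rfl)
  le' := fun i => by
    refine iSup_le fun s => iSup_le fun _ => ?_
    exact Measurable.comap_le (hmeas s)

/-- The hitting time `τ_r = inf{ t ≥ 0 : |η_t| ≥ r }`, with values in `[0,∞]`
(`inf ∅ = ∞`). -/
noncomputable def hitTime {Ω : Type*} (η : ℝ → Ω → ℂ) (r : ℝ) (ω : Ω) : ℝ≥0∞ :=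
  sInf {i : ℝ≥0∞ | ∃ t : ℝ, 0 ≤ t ∧ i = ENNReal.ofReal t ∧ r ≤ ‖η t ω‖}

/-- The event `{τ_{r+r'} − τ_r ≤ l}`, with the convention that the difference is `∞`
(so the event fails) on `{τ_r = ∞}`. -/
def crossEvent {Ω : Type*} (η : ℝ → Ω → ℂ) (r r' l : ℝ) : Set Ω :=
  {ω | hitTime η r ω ≠ ⊤ ∧ hitTime η (r + r') ω ≤ hitTime η r ω + ENNReal.ofReal l}

lemma hitTime_mono {Ω : Type*} (η : ℝ → Ω → ℂ) {r s : ℝ} (h : r ≤ s) (ω : Ω) :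
    hitTime η r ω ≤ hitTime η s ω :=
  sInf_le_sInf (fun _ ⟨t, ht0, hit, hts⟩ => ⟨t, ht0, hit, h.trans hts⟩)


lemma step_abstract {Ω : Type*} {m₁ m₂ : MeasurableSpace Ω} [m0 : MeasurableSpace Ω]
    (μ : Measure Ω) [IsProbabilityMeasure μ] (h12 : m₁ ≤ m₂) (h2 : m₂ ≤ m0)
    {p : ℝ} (hp0 : 0 ≤ p) {A C : Set Ω} (hA : MeasurableSet[m₂] A) (hC : MeasurableSet[m0] C)
    (hcond : ∀ᵐ ω ∂μ, (μ[Set.indicator C (fun _ => (1:ℝ)) | m₂]) ω ≤ p) :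
    ∀ᵐ ω ∂μ, (μ[Set.indicator (A ∩ C) (fun _ => (1:ℝ)) | m₁]) ω
      ≤ p * (μ[Set.indicator A (fun _ => (1:ℝ)) | m₁]) ω := by
  have hAm0 : MeasurableSet[m0] A := h2 _ hA
  have intA : Integrable (Set.indicator A (fun _ => (1:ℝ))) μ :=
    (integrable_const 1).indicator hAm0
  have intC : Integrable (Set.indicator C (fun _ => (1:ℝ))) μ :=
    (integrable_const 1).indicator hC
  have intAC : Integrable (Set.indicator (A ∩ C) (fun _ => (1:ℝ))) μ :=
    (integrable_const 1).indicator (hAm0.inter hC)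
  have hmulAC : Set.indicator (A ∩ C) (fun _ => (1:ℝ))
      = Set.indicator A (fun _ => (1:ℝ)) * Set.indicator C (fun _ => (1:ℝ)) := by
    ext ω
    by_cases hA' : ω ∈ A <;> by_cases hC' : ω ∈ C <;>
      simp [Set.indicator_apply, hA', hC', Set.mem_inter_iff]
  have hpull : μ[Set.indicator (A ∩ C) (fun _ => (1:ℝ)) | m₂]
      =ᵐ[μ] Set.indicator A (fun _ => (1:ℝ)) * μ[Set.indicator C (fun _ => (1:ℝ)) | m₂] := by
    rw [hmulAC]
    exact condExp_mul_of_stronglyMeasurable_left (stronglyMeasurable_const.indicator hA)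
      (hmulAC ▸ intAC) intC
  have hle2 : μ[Set.indicator (A ∩ C) (fun _ => (1:ℝ)) | m₂]
      ≤ᵐ[μ] p • Set.indicator A (fun _ => (1:ℝ)) := by
    filter_upwards [hpull, hcond] with ω h1 h2'
    rw [h1]
    simp only [Pi.mul_apply, Pi.smul_apply, smul_eq_mul]
    by_cases hA' : ω ∈ A
    · simp only [Set.indicator_of_mem hA']
      calc 1 * (μ[Set.indicator C (fun _ => (1:ℝ)) | m₂]) ω ≤ 1 * p := by
            rw [one_mul, one_mul]; exact h2'
        _ = p * 1 := by ring
    · simp [Set.indicator_of_notMem hA']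
  have htower : μ[Set.indicator (A ∩ C) (fun _ => (1:ℝ)) | m₁]
      =ᵐ[μ] μ[μ[Set.indicator (A ∩ C) (fun _ => (1:ℝ)) | m₂] | m₁] :=
    by
    haveI : SigmaFinite (μ.trim h2) := by
      have : IsFiniteMeasure (μ.trim h2) := isFiniteMeasure_trim h2
      infer_instance
    exact (condExp_condExp_of_le (f := Set.indicator (A ∩ C) (fun _ => (1:ℝ)))
      (m₀ := m0) (μ := μ) h12 h2).symm
  have hmono : μ[μ[Set.indicator (A ∩ C) (fun _ => (1:ℝ)) | m₂] | m₁]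
      ≤ᵐ[μ] μ[p • Set.indicator A (fun _ => (1:ℝ)) | m₁] :=
    condExp_mono integrable_condExp (intA.smul p) hle2
  have hsmul : μ[p • Set.indicator A (fun _ => (1:ℝ)) | m₁]
      =ᵐ[μ] p • μ[Set.indicator A (fun _ => (1:ℝ)) | m₁] := condExp_smul p _ _
  filter_upwards [htower, hmono, hsmul] with ω h1 h2' h3
  rw [h1]
  exact h2'.trans (le_of_eq (by rw [h3]; simp))


section Aux

variable {Ω : Type*} [m0 : MeasurableSpace Ω] {η : ℝ → Ω → ℂ} {hmeas : ∀ t, Measurable (η t)}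
  (hstop : ∀ r : ℝ, IsStoppingTime (natFiltration η hmeas)
    (fun ω => ((hitTime η r ω : ℝ≥0∞) : WithTop ℝ≥0∞)))

lemma F_mono {r s : ℝ} (h : r ≤ s) :
    (hstop r).measurableSpace ≤ (hstop s).measurableSpace :=
  IsStoppingTime.measurableSpace_mono _ _ (fun ω => WithTop.coe_le_coe.mpr (hitTime_mono η h ω))

lemma hitTime_measurable_F {r s : ℝ} (h : r ≤ s) :
    Measurable[(hstop s).measurableSpace] (hitTime η r) :=
  ((hstop r).measurable.untopD ⊤).mono (F_mono hstop h) le_rfl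

lemma crossEvent_measurable_F {r d c : ℝ} (hd : 0 ≤ d) :
    MeasurableSet[(hstop (r + d)).measurableSpace] (crossEvent η r d c) := by
  have hτr : Measurable[(hstop (r + d)).measurableSpace] (hitTime η r) :=
    hitTime_measurable_F hstop (by linarith)
  have hτs : Measurable[(hstop (r + d)).measurableSpace] (hitTime η (r + d)) :=
    (hstop (r + d)).measurable.untopD ⊤
  have h1 : MeasurableSet[(hstop (r + d)).measurableSpace] {ω | hitTime η r ω ≠ ⊤} :=
    (hτr (measurableSet_singleton ⊤)).compl
  have h2 : MeasurableSet[(hstop (r + d)).measurableSpace]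
      {ω | hitTime η (r + d) ω ≤ hitTime η r ω + ENNReal.ofReal c} :=
    measurableSet_le hτs (hτr.add_const _)
  exact h1.inter h2

lemma F_le_m0 (r : ℝ) : (hstop r).measurableSpace ≤ m0 :=
  (hstop r).measurableSpace_le

include hstop in
lemma crossEvent_measurable {r d c : ℝ} (hd : 0 ≤ d) :
    MeasurableSet[m0] (crossEvent η r d c) :=
  F_le_m0 hstop (r + d) _ (crossEvent_measurable_F hstop hd)

end Aux

lemma chain {Ω : Type*} [m0 : MeasurableSpace Ω] (ℙ : Measure Ω) [IsProbabilityMeasure ℙ]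
    {η : ℝ → Ω → ℂ} {hmeas : ∀ t, Measurable (η t)}
    (hstop : ∀ r : ℝ, IsStoppingTime (natFiltration η hmeas)
      (fun ω => ((hitTime η r ω : ℝ≥0∞) : WithTop ℝ≥0∞)))
    {p l : ℝ} (hp : p ∈ Set.Ioo (0:ℝ) 1) (hl : 0 < l)
    (hM : ∀ r : ℝ, 0 < r → ∀ᵐ ω ∂ℙ,
      (ℙ[Set.indicator (crossEvent η r 6 l) (fun _ => (1:ℝ)) |
        (hstop r).measurableSpace]) ω < p)
    {r : ℝ} (hr : 0 < r) :
    ∀ n : ℕ, ∀ S : Finset ℕ, S ⊆ Finset.range n →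
      ∀ᵐ ω ∂ℙ, (ℙ[Set.indicator (⋂ k ∈ S, crossEvent η (r + 6 * k) 6 l) (fun _ => (1:ℝ)) |
        (hstop r).measurableSpace]) ω ≤ p ^ S.card := by
  intro n
  induction n with
  | zero =>
    intro S hS
    have hSe : S = ∅ := Finset.subset_empty.mp (by simpa using hS)
    subst hSe
    simp only [Finset.card_empty, pow_zero]
    have h1 : (⋂ k ∈ (∅ : Finset ℕ), crossEvent η (r + 6 * (k:ℝ)) 6 l) = Set.univ := by simp
    rw [h1]
    have h2 : Set.indicator (Set.univ : Set Ω) (fun _ => (1:ℝ)) = fun _ => (1:ℝ) := by simp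
    rw [h2, condExp_const (F_le_m0 hstop r)]
    exact Filter.Eventually.of_forall fun ω => le_rfl
  | succ n ih =>
    intro S hS
    by_cases hn : n ∈ S
    · set S' := S.erase n with hS'def
      have hS' : S' ⊆ Finset.range n := by
        intro k hk
        have hkS := Finset.mem_of_mem_erase hk
        have hkn := Finset.ne_of_mem_erase hk
        have := hS hkS
        simp only [Finset.mem_range] at this ⊢
        omega
      have hins : S = insert n S' := (Finset.insert_erase hn).symm
      have hset : (⋂ k ∈ S, crossEvent η (r + 6 * (k:ℝ)) 6 l)
          = (⋂ k ∈ S', crossEvent η (r + 6 * (k:ℝ)) 6 l) ∩ crossEvent η (r + 6 * (n:ℝ)) 6 l := by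
        rw [hins, Finset.set_biInter_insert, Set.inter_comm]
      have hrn : r ≤ r + 6 * (n:ℝ) := by nlinarith [Nat.cast_nonneg (α := ℝ) n]
      have hA : MeasurableSet[(hstop (r + 6 * (n:ℝ))).measurableSpace]
          (⋂ k ∈ S', crossEvent η (r + 6 * (k:ℝ)) 6 l) := by
        refine MeasurableSet.biInter S'.countable_toSet fun k hk => ?_
        have hkn : k < n := Finset.mem_range.mp (hS' hk)
        have h1 : MeasurableSet[(hstop ((r + 6 * (k:ℝ)) + 6)).measurableSpace]
            (crossEvent η (r + 6 * (k:ℝ)) 6 l) :=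
          crossEvent_measurable_F hstop (by norm_num)
        refine F_mono hstop ?_ _ h1
        have : (k:ℝ) + 1 ≤ (n:ℝ) := by exact_mod_cast hkn
        linarith
      have hC : MeasurableSet[m0] (crossEvent η (r + 6 * (n:ℝ)) 6 l) :=
        crossEvent_measurable hstop (by norm_num)
      have hcond : ∀ᵐ ω ∂ℙ,
          (ℙ[Set.indicator (crossEvent η (r + 6 * (n:ℝ)) 6 l) (fun _ => (1:ℝ)) |
            (hstop (r + 6 * (n:ℝ))).measurableSpace]) ω ≤ p :=
        (hM (r + 6 * (n:ℝ)) (by positivity)).mono fun ω h => h.le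
      have hstep := step_abstract ℙ (F_mono hstop hrn) (F_le_m0 hstop _) hp.1.le hA hC hcond
      have hcard : S.card = S'.card + 1 := by
        rw [hins, Finset.card_insert_of_notMem (Finset.notMem_erase n S)]
      rw [hset, hcard]
      filter_upwards [hstep, ih S' hS'] with ω h1 h2
      calc (ℙ[Set.indicator ((⋂ k ∈ S', crossEvent η (r + 6 * (k:ℝ)) 6 l) ∩
              crossEvent η (r + 6 * (n:ℝ)) 6 l) (fun _ => (1:ℝ)) |
            (hstop r).measurableSpace]) ω
          ≤ p * (ℙ[Set.indicator (⋂ k ∈ S', crossEvent η (r + 6 * (k:ℝ)) 6 l) (fun _ => (1:ℝ)) |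
            (hstop r).measurableSpace]) ω := h1
        _ ≤ p * p ^ S'.card := by
            exact mul_le_mul_of_nonneg_left h2 hp.1.le
        _ = p ^ (S'.card + 1) := by ring
    · exact ih S fun k hk => by
        have := hS hk
        simp only [Finset.mem_range] at this ⊢
        rcases Nat.lt_succ_iff_lt_or_eq.mp this with h | h
        · exact h
        · exact absurd (h ▸ hk) hn

lemma containment {Ω : Type*} {η : ℝ → Ω → ℂ} {r r' l l' : ℝ} (hl : 0 < l)
    (hlr : 0 ≤ l' * r') {N B : ℕ} (hN : 6 * (N:ℝ) ≤ r')
    (hB : ∀ m : ℕ, (m:ℝ) * l ≤ l' * r' → m ≤ B) :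
    crossEvent η r r' (l' * r') ⊆
      ⋃ S ∈ ((Finset.range N).powerset.filter fun S => N - B ≤ S.card),
        (⋂ k ∈ S, crossEvent η (r + 6 * (k:ℝ)) 6 l) := by
  classical
  intro ω hω
  obtain ⟨hfin, hle⟩ := hω
  have hmono : ∀ {x y : ℝ}, x ≤ y → hitTime η x ω ≤ hitTime η y ω := fun h => hitTime_mono η h ω
  have htop : hitTime η r ω + ENNReal.ofReal (l' * r') ≠ ⊤ :=
    ENNReal.add_ne_top.mpr ⟨hfin, ENNReal.ofReal_ne_top⟩
  have hfinall : ∀ x : ℝ, x ≤ r + r' → hitTime η x ω ≠ ⊤ := by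
    intro x hx
    exact ne_top_of_le_ne_top htop ((hmono hx).trans hle)
  set g : ℕ → ℝ := fun k => (hitTime η (r + 6 * (k:ℝ)) ω).toReal with hg
  have hidx : ∀ k : ℕ, k ≤ N → r + 6 * (k:ℝ) ≤ r + r' := by
    intro k hk
    have : (k:ℝ) ≤ (N:ℝ) := by exact_mod_cast hk
    linarith
  have hfink : ∀ k : ℕ, k ≤ N → hitTime η (r + 6 * (k:ℝ)) ω ≠ ⊤ := fun k hk =>
    hfinall _ (hidx k hk)
  have hcast : ∀ k : ℕ, (r + 6 * (k:ℝ)) + 6 = r + 6 * ((k+1 : ℕ):ℝ) := by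
    intro k; push_cast; ring
  set P : ℕ → Prop := fun k =>
    hitTime η ((r + 6 * (k:ℝ)) + 6) ω ≤ hitTime η (r + 6 * (k:ℝ)) ω + ENNReal.ofReal l with hP
  set S : Finset ℕ := (Finset.range N).filter P with hSdef
  set bad : Finset ℕ := (Finset.range N).filter (fun k => ¬ P k) with hbaddef
  -- step bounds
  have hstepnn : ∀ k : ℕ, k < N → 0 ≤ g (k+1) - g k := by
    intro k hk
    have h1 : hitTime η (r + 6 * (k:ℝ)) ω ≤ hitTime η (r + 6 * ((k+1:ℕ):ℝ)) ω := by
      refine hmono ?_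
      push_cast; linarith
    have := ENNReal.toReal_le_toReal (hfink k hk.le) (hfink (k+1) hk)
    simp only [hg]
    linarith [this.mpr h1]
  have hbadstep : ∀ k ∈ bad, l ≤ g (k+1) - g k := by
    intro k hk
    obtain ⟨hkN, hPk⟩ := Finset.mem_filter.mp hk
    have hkN' : k < N := Finset.mem_range.mp hkN
    have hlt : hitTime η (r + 6 * (k:ℝ)) ω + ENNReal.ofReal l
        ≤ hitTime η ((r + 6 * (k:ℝ)) + 6) ω := le_of_not_ge hPk
    rw [hcast k] at hlt
    have hane : hitTime η (r + 6 * (k:ℝ)) ω + ENNReal.ofReal l ≠ ⊤ :=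
      ENNReal.add_ne_top.mpr ⟨hfink k hkN'.le, ENNReal.ofReal_ne_top⟩
    have := ENNReal.toReal_le_toReal hane (hfink (k+1) hkN')
    have h2 := this.mpr hlt
    rw [ENNReal.toReal_add (hfink k hkN'.le) ENNReal.ofReal_ne_top,
      ENNReal.toReal_ofReal hl.le] at h2
    simp only [hg]
    linarith
  -- total bound
  have htotal : g N - g 0 ≤ l' * r' := by
    have h1 : hitTime η (r + 6 * ((N:ℕ):ℝ)) ω ≤ hitTime η r ω + ENNReal.ofReal (l' * r') :=
      (hmono (by linarith)).trans hle
    have h2 := (ENNReal.toReal_le_toReal (hfink N le_rfl) htop).mpr h1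
    rw [ENNReal.toReal_add hfin ENNReal.ofReal_ne_top] at h2
    have h3 : g 0 = (hitTime η r ω).toReal := by
      simp only [hg]
      norm_num
    have h4 : ENNReal.toReal (ENNReal.ofReal (l' * r')) = l' * r' := ENNReal.toReal_ofReal hlr
    have h5 : g N = (hitTime η (r + 6 * (N:ℝ)) ω).toReal := rfl
    rw [h5, h3]
    linarith
  have hsum : (bad.card : ℝ) * l ≤ l' * r' := by
    have h1 : (bad.card : ℝ) * l = ∑ _k ∈ bad, l := by
      rw [Finset.sum_const, nsmul_eq_mul]
    have h2 : ∑ k ∈ bad, l ≤ ∑ k ∈ bad, (g (k+1) - g k) :=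
      Finset.sum_le_sum hbadstep
    have h3 : ∑ k ∈ bad, (g (k+1) - g k) ≤ ∑ k ∈ Finset.range N, (g (k+1) - g k) := by
      refine Finset.sum_le_sum_of_subset_of_nonneg (Finset.filter_subset _ _) ?_
      intro k hk _
      exact hstepnn k (Finset.mem_range.mp hk)
    have h4 : ∑ k ∈ Finset.range N, (g (k+1) - g k) = g N - g 0 := Finset.sum_range_sub g N
    linarith
  have hbadcard : bad.card ≤ B := hB bad.card hsum
  have hcardsum : S.card + bad.card = N := by
    rw [hSdef, hbaddef, Finset.card_filter_add_card_filter_not, Finset.card_range]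
  -- conclude
  have hST : S ∈ (Finset.range N).powerset.filter (fun S => N - B ≤ S.card) := by
    refine Finset.mem_filter.mpr ⟨Finset.mem_powerset.mpr (Finset.filter_subset _ _), ?_⟩
    omega
  refine Set.mem_iUnion₂.mpr ⟨S, hST, ?_⟩
  refine Set.mem_biInter fun k hk => ?_
  obtain ⟨hkN, hPk⟩ := Finset.mem_filter.mp hk
  have hkN' : k < N := Finset.mem_range.mp hkN
  exact ⟨hfink k hkN'.le, hPk⟩

lemma sum_bound {p t : ℝ} (hp0 : 0 < p) (ht0 : 0 < t) (ht1 : t ≤ 1) (N B : ℕ) :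
    ∑ S ∈ ((Finset.range N).powerset.filter fun S => N - B ≤ S.card), p ^ S.card
      ≤ (p + t) ^ N / t ^ B := by
  classical
  have htB : (0:ℝ) < t ^ B := pow_pos ht0 B
  have key : ∀ S ∈ ((Finset.range N).powerset.filter fun S => N - B ≤ S.card),
      p ^ S.card ≤ p ^ S.card * t ^ (N - S.card) / t ^ B := by
    intro S hS
    obtain ⟨hSsub, hScard⟩ := Finset.mem_filter.mp hS
    have hcard : S.card ≤ N := by
      have := Finset.card_le_card (Finset.mem_powerset.mp hSsub)
      simpa [Finset.card_range] using this
    have hexp : N - S.card ≤ B := by omega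
    have h1 : t ^ B ≤ t ^ (N - S.card) := pow_le_pow_of_le_one ht0.le ht1 hexp
    rw [le_div_iff₀ htB]
    have hpc : (0:ℝ) ≤ p ^ S.card := (pow_pos hp0 _).le
    nlinarith
  calc ∑ S ∈ ((Finset.range N).powerset.filter fun S => N - B ≤ S.card), p ^ S.card
      ≤ ∑ S ∈ ((Finset.range N).powerset.filter fun S => N - B ≤ S.card),
          p ^ S.card * t ^ (N - S.card) / t ^ B := Finset.sum_le_sum key
    _ = (∑ S ∈ ((Finset.range N).powerset.filter fun S => N - B ≤ S.card),
          p ^ S.card * t ^ (N - S.card)) / t ^ B := by rw [Finset.sum_div]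
    _ ≤ (∑ S ∈ (Finset.range N).powerset, p ^ S.card * t ^ (N - S.card)) / t ^ B := by
        refine (div_le_div_iff_of_pos_right htB).mpr ?_
        refine Finset.sum_le_sum_of_subset_of_nonneg (Finset.filter_subset _ _) ?_
        intro S _ _
        positivity
    _ = (p + t) ^ N / t ^ B := by
        have := Finset.sum_pow_mul_eq_add_pow p t (Finset.range N)
        rw [Finset.card_range] at this
        rw [this]

lemma pow_div_bound {t q L a ε : ℝ} (ht0 : 0 < t) (ht1 : t ≤ 1) (hq0 : 0 < q) (hq1 : q < 1)
    (hL : L = Real.log (1/t)) (ha : a = -Real.log q / 6) (ha0 : 0 < a)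
    (hε : ε = a / (2*(L+1))) {r' : ℝ} (hr' : 0 < r') {N B : ℕ}
    (hN : r'/6 - 1 ≤ (N:ℝ)) (hB : (B:ℝ) ≤ ε * r') :
    q ^ N / t ^ B ≤ (1/q) * Real.exp (-(a/2) * r') := by
  have hL0 : 0 ≤ L := hL ▸ Real.log_nonneg ((one_le_one_div ht0 ht1))
  have hε0 : 0 < ε := by rw [hε]; positivity
  have hεL : ε * L ≤ a / 2 := by
    have h1 : ε * (L + 1) = a / 2 := by
      rw [hε]; field_simp
    nlinarith
  have hlogq : Real.log q = -(6 * a) := by rw [ha]; ring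
  have hqN : q ^ N = Real.exp ((N:ℝ) * Real.log q) := by
    rw [← Real.log_pow, Real.exp_log (pow_pos hq0 N)]
  have htB : t ^ B = Real.exp ((B:ℝ) * Real.log t) := by
    rw [← Real.log_pow, Real.exp_log (pow_pos ht0 B)]
  have hlogt : Real.log (1/t) = - Real.log t := by
    rw [one_div, Real.log_inv]
  have h1 : q ^ N / t ^ B = Real.exp ((N:ℝ) * Real.log q + (B:ℝ) * L) := by
    rw [hqN, htB, hL, hlogt, ← Real.exp_sub]
    ring_nf
  rw [h1]
  have h2 : (1/q) * Real.exp (-(a/2) * r') = Real.exp (-Real.log q + -(a/2) * r') := by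
    rw [Real.exp_add, Real.exp_neg, Real.exp_log hq0, one_div]
  rw [h2]
  apply Real.exp_le_exp.mpr
  have hlq_neg : Real.log q ≤ 0 := by rw [hlogq]; linarith
  have hN' : (N:ℝ) * Real.log q ≤ (r'/6 - 1) * Real.log q :=
    mul_le_mul_of_nonpos_right hN hlq_neg
  have hBL : (B:ℝ) * L ≤ ε * r' * L := mul_le_mul_of_nonneg_right hB hL0
  have hεrL : ε * r' * L ≤ (a/2) * r' := by
    calc ε * r' * L = (ε * L) * r' := by ring
      _ ≤ (a/2) * r' := mul_le_mul_of_nonneg_right hεL hr'.le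
  calc (N:ℝ) * Real.log q + (B:ℝ) * L ≤ (r'/6 - 1) * Real.log q + (a/2) * r' := by linarith
    _ ≤ -Real.log q + -(a/2) * r' := by rw [hlogq]; ring_nf; linarith


/-- Under hypothesis (M), there exist `l' > 0` and `c₁, c₂ > 0` such that for all `r, r' > 0`,
almost surely `ℙ(τ_{r+r'} − τ_r ≤ l'·r' | F_{τ_r}) < c₁·exp(−c₂·r')`. -/
theorem stmt_6 {Ω : Type*} [m0 : MeasurableSpace Ω] (ℙ : Measure Ω) [IsProbabilityMeasure ℙ]
    (η : ℝ → Ω → ℂ) (hmeas : ∀ t, Measurable (η t))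
    (hcont : ∀ ω, Continuous fun t => η t ω)
    (hstop : ∀ r : ℝ, IsStoppingTime (natFiltration η hmeas)
      (fun ω => ((hitTime η r ω : ℝ≥0∞) : WithTop ℝ≥0∞)))
    (p l : ℝ) (hp : p ∈ Set.Ioo (0:ℝ) 1) (hl : 0 < l)
    (hM : ∀ r : ℝ, 0 < r → ∀ᵐ ω ∂ℙ,
      (ℙ[Set.indicator (crossEvent η r 6 l) (fun _ => (1:ℝ)) |
        (hstop r).measurableSpace]) ω < p) :
    ∃ l' : ℝ, 0 < l' ∧ ∃ c₁ : ℝ, 0 < c₁ ∧ ∃ c₂ : ℝ, 0 < c₂ ∧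
      ∀ r : ℝ, 0 < r → ∀ r' : ℝ, 0 < r' → ∀ᵐ ω ∂ℙ,
        (ℙ[Set.indicator (crossEvent η r r' (l' * r')) (fun _ => (1:ℝ)) |
          (hstop r).measurableSpace]) ω < c₁ * Real.exp (-c₂ * r') := by
  classical
  obtain ⟨hp0, hp1⟩ := hp
  set t : ℝ := (1 - p) / 2 with ht_def
  have ht0 : 0 < t := by rw [ht_def]; linarith
  have ht1 : t ≤ 1 := by rw [ht_def]; linarith
  set q : ℝ := p + t with hq_def
  have hq0 : 0 < q := by rw [hq_def]; linarith
  have hq1 : q < 1 := by rw [hq_def, ht_def]; linarith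
  set L : ℝ := Real.log (1/t) with hL_def
  have hL0 : 0 ≤ L := Real.log_nonneg (one_le_one_div ht0 ht1)
  set a : ℝ := -Real.log q / 6 with ha_def
  have ha0 : 0 < a := by
    have := Real.log_neg hq0 hq1
    rw [ha_def]; linarith
  set ε : ℝ := a / (2*(L+1)) with hε_def
  have hε0 : 0 < ε := by rw [hε_def]; positivity
  refine ⟨ε * l, by positivity, 2/q, by positivity, a/2, by positivity, ?_⟩
  intro r hr r' hr'
  set N : ℕ := ⌊r'/6⌋₊ with hN_def
  set B : ℕ := ⌊ε * r'⌋₊ with hB_def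
  set T := ((Finset.range N).powerset.filter fun S => N - B ≤ S.card) with hT_def
  set E : Set Ω := crossEvent η r r' (ε * l * r') with hE_def
  set f : Finset ℕ → Ω → ℝ :=
    fun S => Set.indicator (⋂ k ∈ S, crossEvent η (r + 6*(k:ℝ)) 6 l) (fun _ => (1:ℝ)) with hf_def
  -- containment
  have hNle : 6 * (N:ℝ) ≤ r' := by
    have h := Nat.floor_le (by positivity : (0:ℝ) ≤ r'/6)
    rw [hN_def]
    linarith [h]
  have hBprop : ∀ m : ℕ, (m:ℝ) * l ≤ (ε * l) * r' → m ≤ B := by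
    intro m hm
    refine Nat.le_floor ?_
    have h2 : (m:ℝ) * l ≤ (ε * r') * l := by nlinarith
    exact le_of_mul_le_mul_right h2 hl
  have hsub : E ⊆ ⋃ S ∈ T, (⋂ k ∈ S, crossEvent η (r + 6*(k:ℝ)) 6 l) :=
    containment (η := η) hl (by positivity) hNle hBprop
  -- measurability and integrability
  have hmeasS : ∀ S : Finset ℕ, MeasurableSet[m0] (⋂ k ∈ S, crossEvent η (r + 6*(k:ℝ)) 6 l) :=
    fun S => MeasurableSet.biInter S.countable_toSet
      (fun k _ => crossEvent_measurable hstop (by norm_num))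
  have hintS : ∀ S ∈ T, Integrable (f S) ℙ :=
    fun S _ => (integrable_const 1).indicator (hmeasS S)
  have hintE : Integrable (Set.indicator E (fun _ => (1:ℝ))) ℙ :=
    (integrable_const 1).indicator (crossEvent_measurable hstop hr'.le)
  -- pointwise domination
  have hpoint : Set.indicator E (fun _ => (1:ℝ)) ≤ ∑ S ∈ T, f S := by
    intro ω
    rw [Finset.sum_apply]
    by_cases hω : ω ∈ E
    · obtain ⟨S, hST, hωS⟩ := Set.mem_iUnion₂.mp (hsub hω)
      rw [Set.indicator_of_mem hω]
      calc (1:ℝ) = f S ω := (Set.indicator_of_mem hωS (fun _ => (1:ℝ))).symm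
        _ ≤ ∑ S ∈ T, f S ω :=
          Finset.single_le_sum (f := fun S => f S ω)
            (fun S _ => Set.indicator_nonneg (fun _ _ => zero_le_one) ω) hST
    · rw [Set.indicator_of_notMem hω]
      exact Finset.sum_nonneg fun S _ => Set.indicator_nonneg (fun _ _ => zero_le_one) ω
  -- conditional expectation estimates
  have hmono : ℙ[Set.indicator E (fun _ => (1:ℝ)) | (hstop r).measurableSpace]
      ≤ᵐ[ℙ] ℙ[∑ S ∈ T, f S | (hstop r).measurableSpace] :=
    condExp_mono hintE (integrable_finset_sum' T hintS) (Filter.Eventually.of_forall hpoint)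
  have hsum_ce : ℙ[∑ S ∈ T, f S | (hstop r).measurableSpace]
      =ᵐ[ℙ] ∑ S ∈ T, ℙ[f S | (hstop r).measurableSpace] :=
    condExp_finset_sum hintS _
  have hchain : ∀ᵐ ω ∂ℙ, ∀ S ∈ T,
      (ℙ[f S | (hstop r).measurableSpace]) ω ≤ p ^ S.card := by
    rw [Filter.eventually_all_finset]
    intro S hS
    exact chain ℙ hstop ⟨hp0, hp1⟩ hl hM hr N S
      (Finset.mem_powerset.mp (Finset.mem_filter.mp hS).1)
  -- numeric bound
  have hnum : ∑ S ∈ T, (p:ℝ) ^ S.card ≤ q ^ N / t ^ B := by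
    rw [hq_def]
    exact sum_bound hp0 ht0 ht1 N B
  have hNlb : r'/6 - 1 ≤ (N:ℝ) := by
    have := Nat.lt_floor_add_one (r'/6)
    rw [hN_def]
    linarith
  have hBub : (B:ℝ) ≤ ε * r' := Nat.floor_le (by positivity)
  have hfinal : q ^ N / t ^ B ≤ (1/q) * Real.exp (-(a/2) * r') :=
    pow_div_bound ht0 ht1 hq0 hq1 hL_def ha_def ha0 hε_def hr' hNlb hBub
  -- conclude
  filter_upwards [hmono, hsum_ce, hchain] with ω h1 h2 h3
  have h4 : (ℙ[Set.indicator E (fun _ => (1:ℝ)) | (hstop r).measurableSpace]) ω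
      ≤ ∑ S ∈ T, (ℙ[f S | (hstop r).measurableSpace]) ω := by
    calc (ℙ[Set.indicator E (fun _ => (1:ℝ)) | (hstop r).measurableSpace]) ω
        ≤ (ℙ[∑ S ∈ T, f S | (hstop r).measurableSpace]) ω := h1
      _ = (∑ S ∈ T, ℙ[f S | (hstop r).measurableSpace]) ω := h2
      _ = ∑ S ∈ T, (ℙ[f S | (hstop r).measurableSpace]) ω := Finset.sum_apply _ _ _
  have h5 : ∑ S ∈ T, (ℙ[f S | (hstop r).measurableSpace]) ω ≤ ∑ S ∈ T, (p:ℝ) ^ S.card :=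
    Finset.sum_le_sum h3
  have hexp_pos : 0 < Real.exp (-(a/2) * r') := Real.exp_pos _
  have hstrict : (1/q) * Real.exp (-(a/2) * r') < (2/q) * Real.exp (-(a/2) * r') := by
    have : (1:ℝ)/q < 2/q := (div_lt_div_iff_of_pos_right hq0).mpr one_lt_two
    nlinarith
  calc (ℙ[Set.indicator E (fun _ => (1:ℝ)) | (hstop r).measurableSpace]) ω
      ≤ ∑ S ∈ T, (p:ℝ) ^ S.card := le_trans h4 h5
    _ ≤ q ^ N / t ^ B := hnum
    _ ≤ (1/q) * Real.exp (-(a/2) * r') := hfinal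
    _ < (2/q) * Real.exp (-(a/2) * r') := hstrict
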